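/- arXiv:1301.4972 — 5 statements merged into one kernel-verified Lean document; each statement's English description precedes it below -/
import Mathlib

section
/- Let f : A* → A* be a morphism and let t be an infinite word of the form t = w · x · f(x) · f²(x) · f³(x) ⋯, where w is a finite word and x is a finite word such that fⁿ(x) is nonempty for all n ≥ 0. Then t is a morphic word. -/
/-- The prefix of length `n` of an infinite word. -/
def wordPrefix {A : Type*} (x : ℕ → A) (n : ℕ) : List A :=
  List.ofFn (fun i : Fin n => x i)

/-- A finite word is a prefix of an infinite word. -/
def IsPrefixOfWord {A : Type*} (w : List A) (x : ℕ → A) : Prop :=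
  wordPrefix x w.length = w

/-- A finite word is a factor of an infinite word. -/
def IsFactor {A : Type*} (w : List A) (x : ℕ → A) : Prop :=
  ∃ i, w = List.ofFn (fun j : Fin w.length => x (i + j))

/-- `y` belongs to the shift orbit closure of `x`. -/
def InOrbitClosure {A : Type*} (y x : ℕ → A) : Prop :=
  ∀ w, IsFactor w y → IsFactor w x

/-- A morphism `A* → B*` applied to a finite word. -/
def applyMorphism {A B : Type*} (f : A → List B) (w : List A) : List B :=
  w.flatMap f

/-- The `n`-th iterate of a morphism applied to a finite word. -/
def applyIter {A : Type*} (f : A → List A) (n : ℕ) (w : List A) : List A :=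
  (applyMorphism f)^[n] w

/-- `y = f(x)` for infinite words: every image of a prefix of `x` is a prefix of `y`. -/
def IsWordImage {A B : Type*} (f : A → List B) (x : ℕ → A) (y : ℕ → B) : Prop :=
  ∀ n, IsPrefixOfWord (applyMorphism f (wordPrefix x n)) y

/-- Prepend a finite word to an infinite word. -/
def prepend {A : Type*} (w : List A) (x : ℕ → A) : ℕ → A :=
  fun n => if h : n < w.length then w.get ⟨n, h⟩ else x (n - w.length)

/-- Strict lexicographic order on infinite words induced by the order `r` on letters. -/
def LexLt {A : Type*} (r : A → A → Prop) (x y : ℕ → A) : Prop :=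
  ∃ n, (∀ i, i < n → x i = y i) ∧ r (x n) (y n)

def LexLe {A : Type*} (r : A → A → Prop) (x y : ℕ → A) : Prop :=
  LexLt r x y ∨ x = y

/-- `l` is the lexicographically least word (w.r.t. `r`) in the shift orbit closure
of `x` beginning with the letter `a`. -/
def IsLeastWord {A : Type*} (r : A → A → Prop) (x : ℕ → A) (a : A) (l : ℕ → A) : Prop :=
  InOrbitClosure l x ∧ l 0 = a ∧ ∀ y, InOrbitClosure y x → y 0 = a → LexLe r l y

/-- `f` is prolongable on `a` (and generates an infinite word from `a`). -/
def IsGenerating {A : Type*} (f : A → List A) (a : A) : Prop :=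
  ∃ s, f a = a :: s ∧ s ≠ [] ∧ ∀ n, applyIter f n s ≠ []

/-- `x` is the pure morphic word `f^ω(a)`. -/
def IsPureMorphic {A : Type*} (f : A → List A) (a : A) (x : ℕ → A) : Prop :=
  x 0 = a ∧ IsGenerating f a ∧ IsWordImage f x x

/-- `x` is a morphic word: the image under a coding of a pure morphic word. -/
def IsMorphic {B : Type*} (x : ℕ → B) : Prop :=
  ∃ (k : ℕ) (g : Fin k → List (Fin k)) (b : Fin k) (c : Fin k → B) (t : ℕ → Fin k),
    IsPureMorphic g b t ∧ x = c ∘ t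

/-- `f ∈ M_x`: each letter `b` has a nonempty "marker" word `p b` such that `f(y)`
begins with `p b` whenever `y ∈ S_x` begins with `b`, and the markers of distinct
letters are prefix-incomparable. -/
def MemM {A B : Type*} (f : A → List B) (x : ℕ → A) : Prop :=
  ∃ p : A → List B, (∀ b, p b ≠ []) ∧
    (∀ (b : A) (y : ℕ → A), InOrbitClosure y x → y 0 = b →
      ∃ n, p b <+: applyMorphism f (wordPrefix y n)) ∧
    (∀ a b : A, a ≠ b → ¬ p a <+: p b ∧ ¬ p b <+: p a)

/-- Every factor occurs infinitely often. -/
def Recurrent {A : Type*} (x : ℕ → A) : Prop :=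
  ∀ w, IsFactor w x → ∀ N, ∃ i, N ≤ i ∧ w = List.ofFn (fun j : Fin w.length => x (i + j))

/-- Ultimately periodic infinite word. -/
def UltimatelyPeriodic {A : Type*} (x : ℕ → A) : Prop :=
  ∃ N p, 0 < p ∧ ∀ n, N ≤ n → x (n + p) = x n

/-- The period-doubling morphism `0 ↦ 01`, `1 ↦ 00`. -/
def pdMorph : Bool → List Bool := fun b => if b then [false, false] else [false, true]

/-- The morphism `0 ↦ 0001`, `1 ↦ 0101`. -/
def gMorph : Bool → List Bool :=
  fun b => if b then [false, true, false, true] else [false, false, false, true]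

/-- The Chacon morphism `0 ↦ 0010`, `1 ↦ 1`. -/
def chMorph : Bool → List Bool := fun b => if b then [true] else [false, false, true, false]

/-- The Rudin–Shapiro morphism `0 ↦ 01`, `1 ↦ 02`, `2 ↦ 31`, `3 ↦ 32`. -/
def rsMorph : Fin 4 → List (Fin 4) := ![[0, 1], [0, 2], [3, 1], [3, 2]]

/-- The Rudin–Shapiro coding `0 ↦ 0`, `1 ↦ 0`, `2 ↦ 1`, `3 ↦ 1`. -/
def rsCoding : Fin 4 → Bool := ![false, false, true, true]

/-- The 2-bit binary representation morphism `0 ↦ 00`, `1 ↦ 01`, `2 ↦ 10`, `3 ↦ 11`. -/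
def hMorph : Fin 4 → List Bool := ![[false, false], [false, true], [true, false], [true, true]]

/-!
Write `w ++ v = a :: u` and `y = f(v) f²(v) ⋯`, so that `t = a u y`. Over the letters
`Option (A ⊕ A)`, let `g` send the start letter `none` to itself followed by a frozen copy of `u`
and a live copy of `f(v)`, erase frozen letters, and act as `f` on live ones. Each application of
`g` to `none · u · f(v) ⋯ fᵏ(v)` produces `none · u · f(v) ⋯ fᵏ⁺¹(v)`, so the fixed point of `g`
is `none · u · y` with marks, and forgetting the marks (and sending `none` to `a`) recovers `t`.
-/

section

variable {A B : Type*}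

theorem isPrefixOfWord_iff {p : List A} {x : ℕ → A} :
    IsPrefixOfWord p x ↔ ∀ i (hi : i < p.length), p[i] = x i := by
  unfold IsPrefixOfWord wordPrefix
  constructor
  · intro h i hi
    rw [List.getElem_of_eq h.symm]
    simp
  · intro h
    exact List.ext_getElem (by simp) fun i _ hi => by simp [h i hi]

theorem IsPrefixOfWord.of_prefix {p q : List A} {x : ℕ → A} (hpq : p <+: q)
    (hq : IsPrefixOfWord q x) : IsPrefixOfWord p x := by
  rw [isPrefixOfWord_iff] at hq ⊢
  intro i hi
  rw [hpq.getElem hi]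
  exact hq i _

theorem IsPrefixOfWord.wordPrefix_prefix {p : List A} {x : ℕ → A} (hp : IsPrefixOfWord p x)
    {n : ℕ} (hn : n ≤ p.length) : wordPrefix x n <+: p := by
  rw [List.prefix_iff_eq_take]
  refine List.ext_getElem (by simp [wordPrefix, hn]) fun i hi _ => ?_
  simp only [List.getElem_take]
  rw [isPrefixOfWord_iff.1 hp i (by simp [wordPrefix] at hi; omega)]
  simp [wordPrefix]

theorem IsPrefixOfWord.map {p : List A} {x : ℕ → A} (hp : IsPrefixOfWord p x) (e : A → B) :
    IsPrefixOfWord (p.map e) (e ∘ x) := by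
  rw [isPrefixOfWord_iff] at hp ⊢
  intro i hi
  simp [hp i (by simpa using hi)]

theorem IsPrefixOfWord.prepend {p : List A} {x : ℕ → A} (hp : IsPrefixOfWord p x) (u : List A) :
    IsPrefixOfWord (u ++ p) (prepend u x) := by
  rw [isPrefixOfWord_iff] at hp ⊢
  intro i hi
  rw [List.getElem_append]
  unfold _root_.prepend
  split_ifs with h
  · rfl
  · exact hp _ (by simp at hi; omega)

theorem IsPrefixOfWord.shift {p q : List A} {x : ℕ → A} (h : IsPrefixOfWord (p ++ q) x) :
    IsPrefixOfWord q (fun n => x (n + p.length)) := by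
  rw [isPrefixOfWord_iff] at h ⊢
  intro i hi
  rw [← h (i + p.length) (by simp; omega), List.getElem_append_right (by omega)]
  simp

theorem prepend_shift {p : List A} {x : ℕ → A} (h : IsPrefixOfWord p x) :
    prepend p (fun n => x (n + p.length)) = x := by
  funext n
  unfold prepend
  split_ifs with hn
  · exact isPrefixOfWord_iff.1 h n hn
  · simp only [Nat.sub_add_cancel (not_lt.1 hn)]

theorem comp_prepend (c : A → B) (u : List A) (x : ℕ → A) :
    c ∘ prepend u x = prepend (u.map c) (c ∘ x) := by
  funext n
  by_cases hn : n < u.length <;> simp [prepend, hn]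

theorem wordPrefix_comp (e : A → B) (x : ℕ → A) (n : ℕ) :
    wordPrefix (e ∘ x) n = (wordPrefix x n).map e := by
  simp only [wordPrefix, List.map_ofFn]
  rfl

@[simp]
theorem applyMorphism_append (f : A → List B) (u v : List A) :
    applyMorphism f (u ++ v) = applyMorphism f u ++ applyMorphism f v :=
  List.flatMap_append

theorem applyMorphism_map {f : A → List A} {g : B → List B} {e : A → B}
    (h : ∀ a, g (e a) = (f a).map e) (l : List A) :
    applyMorphism g (l.map e) = (applyMorphism f l).map e := by
  simp [applyMorphism, List.flatMap_map, List.map_flatMap, h]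

theorem applyIter_succ (f : A → List A) (n : ℕ) (v : List A) :
    applyIter f (n + 1) v = applyIter f n (applyMorphism f v) :=
  Function.iterate_succ_apply _ _ _

theorem applyIter_map {f : A → List A} {g : B → List B} {e : A → B}
    (h : ∀ a, g (e a) = (f a).map e) (n : ℕ) (l : List A) :
    applyIter g n (l.map e) = (applyIter f n l).map e := by
  induction n generalizing l with
  | zero => rfl
  | succ n ih => rw [applyIter_succ, applyIter_succ, applyMorphism_map h, ih]

theorem applyIter_append (f : A → List A) (n : ℕ) (u v : List A) :
    applyIter f n (u ++ v) = applyIter f n u ++ applyIter f n v := by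
  induction n generalizing u v with
  | zero => rfl
  | succ n ih => rw [applyIter_succ, applyIter_succ, applyIter_succ, applyMorphism_append, ih]

theorem IsWordImage.of_prefixes {g : A → List B} {x : ℕ → A} {y : ℕ → B}
    (h : ∀ n, ∃ p, n ≤ p.length ∧ IsPrefixOfWord p x ∧
      IsPrefixOfWord (applyMorphism g p) y) :
    IsWordImage g x y := by
  intro n
  obtain ⟨p, hn, hpx, hpy⟩ := h n
  obtain ⟨r, hr⟩ := hpx.wordPrefix_prefix hn
  refine hpy.of_prefix ⟨applyMorphism g r, ?_⟩
  rw [← hr, applyMorphism_append]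

section Semiconj

variable {g : A → List A} {g' : B → List B} {e : A → B}

theorem IsWordImage.map (h : ∀ a, g' (e a) = (g a).map e) {x y : ℕ → A}
    (hxy : IsWordImage g x y) : IsWordImage g' (e ∘ x) (e ∘ y) := by
  intro n
  rw [wordPrefix_comp, applyMorphism_map h]
  exact (hxy n).map e

theorem IsGenerating.map (h : ∀ a, g' (e a) = (g a).map e) {b : A} (hb : IsGenerating g b) :
    IsGenerating g' (e b) := by
  obtain ⟨s, hbs, hs, hiter⟩ := hb
  refine ⟨s.map e, by rw [h, hbs, List.map_cons], by simpa using hs, fun n => ?_⟩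
  simpa [applyIter_map h] using hiter n

theorem IsPureMorphic.map (h : ∀ a, g' (e a) = (g a).map e) {b : A} {x : ℕ → A}
    (hx : IsPureMorphic g b x) : IsPureMorphic g' (e b) (e ∘ x) :=
  ⟨by simp [hx.1], hx.2.1.map h, hx.2.2.map h⟩

end Semiconj

theorem IsPureMorphic.isMorphic_comp [Fintype A] {g : A → List A} {b : A} {x : ℕ → A}
    (hx : IsPureMorphic g b x) (c : A → B) : IsMorphic (c ∘ x) := by
  let e := Fintype.equivFin A
  refine ⟨_, fun i => (g (e.symm i)).map e, e b, c ∘ e.symm, e ∘ x, hx.map fun a => ?_, ?_⟩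
  · simp
  · funext n; simp

def concatIterates (f : A → List A) (v : List A) (k : ℕ) : List A :=
  (List.ofFn fun i : Fin k => applyIter f i v).flatten

theorem concatIterates_zero (f : A → List A) (v : List A) : concatIterates f v 0 = [] := rfl

theorem concatIterates_succ (f : A → List A) (v : List A) (k : ℕ) :
    concatIterates f v (k + 1) = v ++ concatIterates f (applyMorphism f v) k := by
  simp only [concatIterates, List.ofFn_succ, List.flatten_cons, Fin.val_succ, applyIter_succ]
  rfl

theorem concatIterates_succ' (f : A → List A) (v : List A) (k : ℕ) :
    concatIterates f v (k + 1) = v ++ applyMorphism f (concatIterates f v k) := by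
  induction k generalizing v with
  | zero => simp [concatIterates_succ, concatIterates_zero, applyMorphism]
  | succ k ih => rw [concatIterates_succ, ih, concatIterates_succ f v k, applyMorphism_append]

theorem le_length_concatIterates {f : A → List A} {v : List A}
    (hv : ∀ n, applyIter f n v ≠ []) (k : ℕ) : k ≤ (concatIterates f v k).length := by
  induction k generalizing v with
  | zero => simp
  | succ k ih =>
    have : 0 < v.length := List.length_pos_iff.2 (hv 0)
    have := ih fun n => applyIter_succ f n v ▸ hv (n + 1)
    rw [concatIterates_succ, List.length_append]
    omega

section Prefixed

/-- On `Option (A ⊕ A)`, `none` is the starting letter, `some (.inl a)` is a letter of the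
prefix `u`, erased once it has been produced, and `some (.inr a)` is a letter evolving under `f`. -/
def prefixedMorphism (f : A → List A) (u v : List A) :
    Option (A ⊕ A) → List (Option (A ⊕ A))
  | none => none :: (u.map (some ∘ .inl) ++ v.map (some ∘ .inr))
  | some (.inl _) => []
  | some (.inr a) => (f a).map (some ∘ .inr)

def prefixedCoding (a : A) : Option (A ⊕ A) → A
  | none => a
  | some (.inl b) => b
  | some (.inr b) => b

def prefixedWord (u : List A) (y : ℕ → A) : ℕ → Option (A ⊕ A) :=
  prepend (none :: u.map (some ∘ .inl)) (some ∘ .inr ∘ y)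

variable {f : A → List A} {u v : List A}

theorem applyMorphism_prefixedMorphism_inl (l : List A) :
    applyMorphism (prefixedMorphism f u v) (l.map (some ∘ .inl)) = [] := by
  simp [applyMorphism, List.flatMap_map, prefixedMorphism]

theorem applyMorphism_prefixedMorphism_inr (l : List A) :
    applyMorphism (prefixedMorphism f u v) (l.map (some ∘ .inr)) =
      (applyMorphism f l).map (some ∘ .inr) :=
  applyMorphism_map (g := prefixedMorphism f u v) (e := some ∘ .inr) (fun _ => rfl) l

theorem applyIter_prefixedMorphism_inr (n : ℕ) (l : List A) :
    applyIter (prefixedMorphism f u v) n (l.map (some ∘ .inr)) =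
      (applyIter f n l).map (some ∘ .inr) :=
  applyIter_map (g := prefixedMorphism f u v) (e := some ∘ .inr) (fun _ => rfl) n l

theorem isGenerating_prefixedMorphism (hv : ∀ n, applyIter f n v ≠ []) :
    IsGenerating (prefixedMorphism f u v) none := by
  have hv₀ : v ≠ [] := hv 0
  refine ⟨_, rfl, by simp [hv₀], fun n => ?_⟩
  simpa [applyIter_append, applyIter_prefixedMorphism_inr] using fun _ => hv n

theorem applyMorphism_prefixedMorphism_concatIterates (k : ℕ) :
    applyMorphism (prefixedMorphism f u v)
        (none :: u.map (some ∘ .inl) ++ (concatIterates f v k).map (some ∘ .inr)) =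
      none :: u.map (some ∘ .inl) ++ (concatIterates f v (k + 1)).map (some ∘ .inr) := by
  rw [List.cons_append, applyMorphism, List.flatMap_cons, ← applyMorphism, applyMorphism_append,
    applyMorphism_prefixedMorphism_inl, applyMorphism_prefixedMorphism_inr, concatIterates_succ']
  simp [prefixedMorphism]

theorem isPureMorphic_prefixedWord (hv : ∀ n, applyIter f n v ≠ []) {y : ℕ → A}
    (hy : ∀ k, IsPrefixOfWord (concatIterates f v k) y) :
    IsPureMorphic (prefixedMorphism f u v) none (prefixedWord u y) := by
  have hprefix (k : ℕ) : IsPrefixOfWord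
      (none :: u.map (some ∘ .inl) ++ (concatIterates f v k).map (some ∘ .inr))
      (prefixedWord u y) :=
    ((hy k).map _).prepend _
  refine ⟨rfl, isGenerating_prefixedMorphism hv,
    .of_prefixes fun k => ⟨_, ?_, hprefix k, ?_⟩⟩
  · have := le_length_concatIterates hv k
    simp only [List.cons_append, List.length_cons, List.length_append, List.length_map]
    omega
  · rw [applyMorphism_prefixedMorphism_concatIterates]
    exact hprefix (k + 1)

theorem prefixedCoding_comp_prefixedWord (a : A) (y : ℕ → A) :
    prefixedCoding a ∘ prefixedWord u y = prepend (a :: u) y := by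
  rw [prefixedWord, comp_prepend]
  simp [Function.comp_def, prefixedCoding]

end Prefixed

theorem isMorphic_prepend_cons [Fintype A] {f : A → List A} {v : List A}
    (hv : ∀ n, applyIter f n v ≠ []) {y : ℕ → A}
    (hy : ∀ k, IsPrefixOfWord (concatIterates f v k) y) (a : A) (u : List A) :
    IsMorphic (prepend (a :: u) y) :=
  prefixedCoding_comp_prefixedWord a y ▸ (isPureMorphic_prefixedWord hv hy).isMorphic_comp _

end

theorem stmt2 {A : Type*} [Fintype A] (f : A → List A) (w v : List A)
    (hv : ∀ n, applyIter f n v ≠ []) (t : ℕ → A)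
    (ht : ∀ n, IsPrefixOfWord (w ++ (List.ofFn (fun i : Fin n => applyIter f i v)).flatten) t) :
    IsMorphic t := by
  have hprefix (k : ℕ) : IsPrefixOfWord (w ++ v ++ concatIterates f (applyMorphism f v) k) t := by
    have h : IsPrefixOfWord (w ++ concatIterates f v (k + 1)) t := ht (k + 1)
    rwa [concatIterates_succ, ← List.append_assoc] at h
  have hne : w ++ v ≠ [] := by simp [show v ≠ [] from hv 0]
  generalize w ++ v = p at hprefix hne
  obtain ⟨a, u, rfl⟩ := List.exists_cons_of_ne_nil hne
  rw [← prepend_shift (x := t) (by simpa [concatIterates_zero] using hprefix 0)]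
  exact isMorphic_prepend_cons (fun n => hv (n + 1)) (fun k => (hprefix k).shift) a u
end

section
/- Let f : {0,1}* → {0,1}* be a binary morphism with f(01) ≠ f(10). Then for every infinite binary word x, the morphism f belongs to the class M_x: for each letter b ∈ {0,1} there exists a nonempty finite word p_b such that for every infinite word y in the shift orbit closure of x beginning with b, the word f(y) begins with p_b, and neither of p_0, p_1 is a prefix of the other. -/
/-!
If `uv ≠ vu`, there is a length `m` such that the length-`m` prefixes of `uv` and `vu`
differ, while every long enough word of `u{u,v}*` begins with that of `uv` and every long
enough word of `v{u,v}*` with that of `vu`. This goes by induction on `|u| + |v|`, as in the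
Euclidean algorithm: if `v = uw`, the length for `(u, uw)` is `|u|` plus the length for
`(u, w)`; if neither word is a prefix of the other, `m = min(|u|, |v|)` works.
For `u = f(0)` and `v = f(1)` these two prefixes are the markers: they have equal length and
differ, so neither is a prefix of the other, and `f(y)` lies in `f(y₀){u,v}^ω`.
-/

open Computability

namespace Language

variable {α β : Type*}

theorem append_mem_kstar {l : Language α} {a b : List α} (ha : a ∈ l∗) (hb : b ∈ l∗) :
    a ++ b ∈ l∗ := by
  rw [← kstar_mul_kstar l]
  exact append_mem_mul ha hb

theorem mem_kstar_of_mem {l : Language α} {a : List α} (h : a ∈ l) : a ∈ l∗ :=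
  (le_kstar : l ≤ l∗) h

theorem flatMap_mem_kstar {l : Language β} {f : α → List β} {w : List α}
    (h : ∀ a ∈ w, f a ∈ l) : w.flatMap f ∈ l∗ :=
  join_mem_kstar (by simpa using h)

theorem pair_comm (u v : List α) : ({u, v} : Language α) = {v, u} :=
  Set.pair_comm u v

theorem kstar_pair_append_le (u w : List α) :
    ({u, u ++ w} : Language α)∗ ≤ ({u, w} : Language α)∗ := by
  refine (kstar_mono ?_).trans (kstar_idem _).le
  rintro x (rfl | rfl)
  · exact mem_kstar_of_mem (.inl rfl)
  · exact append_mem_kstar (mem_kstar_of_mem (.inl rfl))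
      (mem_kstar_of_mem (.inr rfl))

theorem eq_nil_or_exists_of_mem_kstar_pair_append {u w s : List α}
    (hs : s ∈ ({u, u ++ w} : Language α)∗) :
    s = [] ∨ ∃ s' ∈ ({u, w} : Language α)∗, s = u ++ s' := by
  obtain ⟨_ | ⟨x, L⟩, rfl, hL⟩ := mem_kstar.1 hs
  · exact .inl rfl
  · have htail : L.flatten ∈ ({u, w} : Language α)∗ :=
      kstar_pair_append_le u w
        (join_mem_kstar fun y hy => hL y (List.mem_cons_of_mem _ hy))
    right
    rcases hL x List.mem_cons_self with rfl | rfl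
    · exact ⟨_, htail, rfl⟩
    · exact ⟨w ++ L.flatten,
        append_mem_kstar (mem_kstar_of_mem (.inr rfl)) htail, by simp⟩

end Language

section Separation

variable {α : Type*} {u v w : List α} {m : ℕ}

def ForcesPrefix (u v : List α) (m : ℕ) : Prop :=
  ∀ s ∈ ({u, v} : Language α)∗, m ≤ (u ++ s).length → (u ++ v).take m <+: u ++ s

def Separates (u v : List α) (m : ℕ) : Prop :=
  (u ++ v).take m ≠ (v ++ u).take m ∧ ForcesPrefix u v m ∧ ForcesPrefix v u m

theorem Separates.symm (h : Separates u v m) : Separates v u m :=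
  ⟨h.1.symm, h.2.2, h.2.1⟩

theorem Separates.ne_zero (h : Separates u v m) : m ≠ 0 := by
  rintro rfl
  exact h.1 rfl

theorem Separates.append_right (h : Separates u w m) : Separates u (u ++ w) (u.length + m) := by
  have hm := h.ne_zero
  obtain ⟨hne, hu, hw⟩ := h
  refine ⟨?_, ?_, ?_⟩
  · rw [List.append_assoc u w u, List.take_length_add_append, List.take_length_add_append]
    exact fun e => hne (List.append_cancel_left e)
  · intro s hs hlen
    rcases Language.eq_nil_or_exists_of_mem_kstar_pair_append hs with rfl | ⟨s', hs', rfl⟩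
    · simp only [List.append_nil] at hlen
      omega
    · rw [List.take_length_add_append, List.prefix_append_right_inj]
      exact hu s' hs' (by simp only [List.length_append] at hlen ⊢; omega)
  · intro t ht hlen
    rw [List.append_assoc u w u, List.take_length_add_append, List.append_assoc u w t,
      List.prefix_append_right_inj]
    have ht' : t ∈ ({w, u} : Language α)∗ := by
      rw [Language.pair_comm] at ht ⊢
      exact Language.kstar_pair_append_le u w ht
    exact hw t ht' (by simp only [List.length_append] at hlen ⊢; omega)

theorem separates_min_length (huv : ¬u <+: v) (hvu : ¬v <+: u) :
    Separates u v (min u.length v.length) := by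
  refine ⟨?_, ?_, ?_⟩
  · rw [List.take_append_of_le_length (min_le_left _ _),
      List.take_append_of_le_length (min_le_right _ _)]
    intro e
    rcases le_total u.length v.length with h | h
    · rw [min_eq_left h, List.take_length] at e
      exact huv (e ▸ List.take_prefix _ _)
    · rw [min_eq_right h, List.take_length] at e
      exact hvu (e ▸ List.take_prefix _ _)
  · intro s _ _
    rw [List.take_append_of_le_length (min_le_left _ _)]
    exact (List.take_prefix _ u).trans (List.prefix_append u s)
  · intro t _ _
    rw [List.take_append_of_le_length (min_le_right _ _)]
    exact (List.take_prefix _ v).trans (List.prefix_append v t)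

theorem exists_separates (h : u ++ v ≠ v ++ u) : ∃ m, Separates u v m := by
  induction hn : u.length + v.length using Nat.strong_induction_on generalizing u v with
  | _ n ih =>
  by_cases huv : u <+: v
  · obtain ⟨w, rfl⟩ := huv
    have hu : u ≠ [] := by rintro rfl; simp at h
    have huw : u ++ w ≠ w ++ u := fun e =>
      h ((congrArg (u ++ ·) e).trans (List.append_assoc u w u).symm)
    obtain ⟨m, hm⟩ := ih _ (by simp [← hn, List.length_pos_iff.2 hu]) huw rfl
    exact ⟨_, hm.append_right⟩
  by_cases hvu : v <+: u
  · obtain ⟨w, rfl⟩ := hvu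
    have hv : v ≠ [] := by rintro rfl; simp at h
    have hvw : v ++ w ≠ w ++ v := fun e =>
      h ((List.append_assoc v w v).trans (congrArg (v ++ ·) e.symm))
    obtain ⟨m, hm⟩ := ih _ (by simp [← hn, List.length_pos_iff.2 hv]) hvw rfl
    exact ⟨_, hm.append_right.symm⟩
  exact ⟨_, separates_min_length huv hvu⟩

end Separation

theorem List.length_le_length_flatMap {α β : Type*} {l : List α} {f : α → List β}
    (h : ∀ a ∈ l, f a ≠ []) : l.length ≤ (l.flatMap f).length := by
  induction l with
  | nil => simp
  | cons a l ih =>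
    simp only [List.flatMap_cons, List.length_append, List.length_cons]
    have := List.length_pos_iff.2 (h a List.mem_cons_self)
    have := ih fun b hb => h b (List.mem_cons_of_mem a hb)
    omega

theorem wordPrefix_succ {α : Type*} (y : ℕ → α) (n : ℕ) :
    wordPrefix y (n + 1) = y 0 :: wordPrefix (fun k => y (k + 1)) n := by
  simp [wordPrefix, List.ofFn_succ]

theorem ForcesPrefix.take_prefix_applyMorphism {α : Type*} {f : Bool → List α} {b : Bool}
    {m : ℕ} (hb : ForcesPrefix (f b) (f (!b)) m) (hf : ∀ c, f c ≠ []) {y : ℕ → Bool}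
    (hy : y 0 = b) : (f b ++ f (!b)).take m <+: applyMorphism f (wordPrefix y m) := by
  cases m with
  | zero => exact List.nil_prefix
  | succ k =>
    set l := wordPrefix (fun k => y (k + 1)) k
    have hl : l.length = k := List.length_ofFn
    have himage : applyMorphism f (wordPrefix y (k + 1)) = f b ++ l.flatMap f := by
      rw [wordPrefix_succ, hy]
      rfl
    have hmem : l.flatMap f ∈ ({f b, f (!b)} : Language α)∗ :=
      Language.flatMap_mem_kstar fun c _ => by
        cases b <;> cases c <;> first | exact .inl rfl | exact .inr rfl
    have hlen : k + 1 ≤ (f b ++ l.flatMap f).length := by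
      have := List.length_pos_iff.2 (hf b)
      have := List.length_le_length_flatMap (l := l) fun c _ => hf c
      simp only [List.length_append]
      omega
    rw [himage]
    exact hb _ hmem hlen

theorem stmt5 (f : Bool → List Bool) (h : f false ++ f true ≠ f true ++ f false) :
    ∀ x : ℕ → Bool, MemM f x := by
  intro x
  have hf : ∀ b, f b ≠ [] := by
    rintro (_ | _) e <;> simp [e] at h
  obtain ⟨m, hne, hforce₀, hforce₁⟩ := exists_separates h
  have hforce : ∀ b, ForcesPrefix (f b) (f (!b)) m := by
    rintro (_ | _)
    exacts [hforce₀, hforce₁]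
  have hlen : ((f true ++ f false).take m).length = ((f false ++ f true).take m).length := by
    simp [add_comm]
  have hincomp : ∀ b, ¬(f b ++ f (!b)).take m <+: (f (!b) ++ f b).take m := by
    rintro (_ | _) hp
    exacts [hne (hp.eq_of_length hlen.symm), hne (hp.eq_of_length hlen).symm]
  refine ⟨fun b => (f b ++ f (!b)).take m,
    fun b (hb : (f b ++ f (!b)).take m = []) => hincomp b (hb ▸ List.nil_prefix),
    fun b y _ hy => ⟨m, (hforce b).take_prefix_applyMorphism hf hy⟩, ?_⟩
  rintro (_ | _) (_ | _) hab <;> first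
    | exact absurd rfl hab
    | exact ⟨hincomp _, hincomp _⟩
end

section
/- Let x be a recurrent infinite binary word over {0,1} in which both letters 0 and 1 occur, and let ρ be the order 0 < 1. Then the lexicographically least word in the shift orbit closure of x beginning with 1 equals 1 followed by the lexicographically least word in the shift orbit closure of x beginning with 0; that is, l_{1,ρ,x} = 1 · l_{0,ρ,x}. -/
/-!
Write `l₀`, `l₁` for the least words of `S_x` beginning with `0` and `1`. Since every word
beginning with `1` exceeds every word beginning with `0`, `l₀` is least in all of `S_x`; the tail
of `l₁` lies in `S_x`, so `1 l₀ ≤ l₁`. Conversely `1 l₀ ∈ S_x`: by recurrence `l₀` has some left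
extension `b l₀ ∈ S_x`, and if `b = 0` then `l₀ ≤ 0 l₀` forces `l₀ = 0^ω`, in which case the
blocks `0^n` of `x` lying right of an occurrence of `1` give `1 0^ω ∈ S_x`. Hence `l₁ ≤ 1 l₀`.
-/

section OrbitClosure

variable {A : Type*} {x y z : ℕ → A}

@[simp]
theorem prepend_singleton_zero (a : A) (z : ℕ → A) : prepend [a] z 0 = a := rfl

@[simp]
theorem prepend_singleton_succ (a : A) (z : ℕ → A) (n : ℕ) : prepend [a] z (n + 1) = z n := rfl

theorem prepend_singleton_tail {a : A} (h : y 0 = a) : prepend [a] (fun n => y (n + 1)) = y := by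
  funext n
  cases n <;> simp [h]

theorem isFactor_iff {w : List A} :
    IsFactor w x ↔ ∃ i, ∀ q (hq : q < w.length), w[q] = x (i + q) := by
  refine exists_congr fun i => ⟨fun h q hq => ?_, fun h => ?_⟩
  · rw [List.getElem_of_eq h hq, List.getElem_ofFn]
  · exact List.ext_getElem (by simp) fun q hq _ => by rw [List.getElem_ofFn]; exact h q hq

theorem wordPrefix_eq_ofFn_iff {n i : ℕ} :
    wordPrefix y n = List.ofFn (fun j : Fin (wordPrefix y n).length => x (i + j)) ↔
      ∀ q < n, y q = x (i + q) := by
  simp [wordPrefix, funext_iff, Fin.forall_iff]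

theorem isFactor_wordPrefix_iff {n : ℕ} :
    IsFactor (wordPrefix y n) x ↔ ∃ i, ∀ q < n, y q = x (i + q) :=
  exists_congr fun _ => wordPrefix_eq_ofFn_iff

theorem isFactor_wordPrefix_self (y : ℕ → A) (n : ℕ) : IsFactor (wordPrefix y n) y :=
  isFactor_wordPrefix_iff.2 ⟨0, by simp⟩

theorem inOrbitClosure_iff : InOrbitClosure y x ↔ ∀ n, ∃ i, ∀ q < n, y q = x (i + q) := by
  refine ⟨fun h n => isFactor_wordPrefix_iff.1 (h _ (isFactor_wordPrefix_self y n)),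
    fun h w hw => ?_⟩
  obtain ⟨i, hi⟩ := isFactor_iff.1 hw
  obtain ⟨p, hp⟩ := h (i + w.length)
  exact isFactor_iff.2 ⟨p + i, fun q hq => by rw [hi q hq, hp _ (by omega), add_assoc]⟩

theorem InOrbitClosure.tail (h : InOrbitClosure y x) :
    InOrbitClosure (fun n => y (n + 1)) x := by
  rw [inOrbitClosure_iff] at h ⊢
  intro n
  obtain ⟨i, hi⟩ := h (n + 1)
  exact ⟨i + 1, fun q hq => (hi (q + 1) (by omega)).trans (congrArg x (by omega))⟩

theorem Recurrent.exists_ge_of_inOrbitClosure (hrec : Recurrent x) (hy : InOrbitClosure y x)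
    (n N : ℕ) : ∃ i, N ≤ i ∧ ∀ q < n, y q = x (i + q) := by
  obtain ⟨i, hNi, hi⟩ := hrec _ (hy _ (isFactor_wordPrefix_self y n)) N
  exact ⟨i, hNi, wordPrefix_eq_ofFn_iff.1 hi⟩

-- Pigeonhole on the letter preceding each occurrence.
theorem exists_prepend_inOrbitClosure_of_forall [Finite A] {P : A → Prop}
    (hocc : ∀ n, ∃ i, P (x i) ∧ ∀ q < n, z q = x (i + 1 + q)) :
    ∃ b, P b ∧ InOrbitClosure (prepend [b] z) x := by
  choose i hP hz using hocc
  obtain ⟨b, hb⟩ := Finite.exists_infinite_fiber (x ∘ i)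
  have hfiber := Set.infinite_coe_iff.1 hb
  obtain ⟨m₀, hm₀⟩ := hfiber.nonempty
  refine ⟨b, hm₀ ▸ hP m₀, inOrbitClosure_iff.2 fun n => ?_⟩
  obtain ⟨m, hm, hnm⟩ := hfiber.exists_gt n
  refine ⟨i m, fun q hq => ?_⟩
  cases q with
  | zero => exact hm.symm
  | succ q => rw [prepend_singleton_succ, hz m q (by omega), add_assoc, add_comm 1 q]

theorem Recurrent.exists_prepend_inOrbitClosure [Finite A] (hrec : Recurrent x)
    (hz : InOrbitClosure z x) : ∃ b, InOrbitClosure (prepend [b] z) x := by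
  have hocc : ∀ n, ∃ i, True ∧ ∀ q < n, z q = x (i + 1 + q) := fun n => by
    obtain ⟨i, hi, hzi⟩ := hrec.exists_ge_of_inOrbitClosure hz n 1
    exact ⟨i - 1, trivial, fun q hq => by rw [hzi q hq]; congr 1; omega⟩
  obtain ⟨b, -, hb⟩ := exists_prepend_inOrbitClosure_of_forall (P := fun _ => True) hocc
  exact ⟨b, hb⟩

-- A run `a^(i₀ + 1 + n)` lies to the right of the letter `x i₀ ≠ a`, and the last letter `≠ a`
-- before the run is followed by at least `n` copies of `a`.
theorem exists_prepend_ne_inOrbitClosure_of_const [Finite A] {a : A}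
    (hconst : InOrbitClosure (fun _ => a) x) (hx : ∃ i, x i ≠ a) :
    ∃ b ≠ a, InOrbitClosure (prepend [b] fun _ => a) x := by
  classical
  obtain ⟨i₀, hi₀⟩ := hx
  refine exists_prepend_inOrbitClosure_of_forall fun n => ?_
  obtain ⟨j, hj⟩ := inOrbitClosure_iff.1 hconst (i₀ + 1 + n)
  have hij : i₀ < j := by
    by_contra! h
    exact hi₀ (by simpa [show j + (i₀ - j) = i₀ by omega] using (hj (i₀ - j) (by omega)).symm)
  set p := Nat.findGreatest (fun p => x p ≠ a) (j - 1)
  have hp : x p ≠ a := Nat.findGreatest_spec (P := fun p => x p ≠ a) (by omega : i₀ ≤ j - 1) hi₀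
  refine ⟨p, hp, fun q hq => ?_⟩
  by_cases hpq : p + 1 + q ≤ j - 1
  · have := Nat.findGreatest_is_greatest (P := fun p => x p ≠ a) (k := p + 1 + q) (by omega) hpq
    exact (not_not.1 this).symm
  · have hpj : p ≤ j - 1 := Nat.findGreatest_le _
    rw [hj (p + 1 + q - j) (by omega)]
    congr 1
    omega

end OrbitClosure

section Lex

variable {A : Type*}

theorem lexLe_iff_toLex_le [PartialOrder A] {x y : ℕ → A} :
    LexLe (· < ·) x y ↔ toLex x ≤ toLex y := by
  rw [le_iff_eq_or_lt, toLex_inj, or_comm]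
  rfl

theorem toLex_prepend_lt_toLex_prepend [LT A] {a : A} {u v : ℕ → A}
    (h : toLex u < toLex v) : toLex (prepend [a] u) < toLex (prepend [a] v) := by
  obtain ⟨n, hlt, hn⟩ := h
  refine ⟨n + 1, fun i hi => ?_, hn⟩
  cases i with
  | zero => rfl
  | succ i => exact hlt i (by omega)

theorem toLex_prepend_le_toLex_prepend [PartialOrder A] {a : A} {u v : ℕ → A}
    (h : toLex u ≤ toLex v) : toLex (prepend [a] u) ≤ toLex (prepend [a] v) := by
  rcases h.lt_or_eq with h | h
  · exact (toLex_prepend_lt_toLex_prepend h).le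
  · rw [toLex.injective h]

-- At the first letter of `l` that is not `⊥`, the word `⊥ l` still reads `⊥`.
theorem eq_bot_of_toLex_le_prepend_bot [LinearOrder A] [OrderBot A] {l : ℕ → A} (h0 : l 0 = ⊥)
    (h : toLex l ≤ toLex (prepend [⊥] l)) : l = fun _ => ⊥ := by
  classical
  by_contra hne
  have hex : ∃ n, l n ≠ ⊥ := by simpa [funext_iff] using hne
  obtain ⟨k, hk⟩ : ∃ k, Nat.find hex = k + 1 :=
    Nat.exists_eq_succ_of_ne_zero fun h => Nat.find_spec hex (by rwa [h])
  have hbelow : ∀ i < k + 1, l i = ⊥ := fun i hi => not_not.1 (Nat.find_min hex (hk ▸ hi))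
  refine h.not_gt ⟨k + 1, fun i hi => ?_, ?_⟩
  · cases i with
    | zero => exact h0.symm
    | succ i =>
      rw [Pi.toLex_apply, Pi.toLex_apply, prepend_singleton_succ, hbelow i (by omega),
        hbelow (i + 1) hi]
  · rw [Pi.toLex_apply, Pi.toLex_apply, prepend_singleton_succ, hbelow k (by omega)]
    exact bot_lt_iff_ne_bot.2 (hk ▸ Nat.find_spec hex)

theorem IsLeastWord.toLex_le_of_inOrbitClosure [LinearOrder A] [OrderBot A] {x l y : ℕ → A}
    (hl : IsLeastWord (· < ·) x ⊥ l) (hy : InOrbitClosure y x) : toLex l ≤ toLex y := by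
  by_cases hy0 : y 0 = ⊥
  · exact lexLe_iff_toLex_le.1 (hl.2.2 y hy hy0)
  · exact (show toLex l < toLex y from ⟨0, nofun, by simpa [hl.2.1, bot_lt_iff_ne_bot]⟩).le

end Lex

theorem IsLeastWord.prepend_true_inOrbitClosure {x l : ℕ → Bool} (hrec : Recurrent x)
    (h1 : ∃ i, x i = true) (hl : IsLeastWord (· < ·) x false l) :
    InOrbitClosure (prepend [true] l) x := by
  obtain ⟨b, hb⟩ := hrec.exists_prepend_inOrbitClosure hl.1
  cases b with
  | true => exact hb
  | false =>
    have hconst : l = fun _ => false :=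
      eq_bot_of_toLex_le_prepend_bot hl.2.1 (hl.toLex_le_of_inOrbitClosure hb)
    obtain ⟨c, hc, hmem⟩ := exists_prepend_ne_inOrbitClosure_of_const (hconst ▸ hl.1)
      (by simpa using h1)
    rwa [hconst, ← Bool.eq_true_of_not_eq_false hc]

theorem stmt7_general (x : ℕ → Bool) (hrec : Recurrent x)
    (h1 : ∃ i, x i = true)
    (l0 l1 : ℕ → Bool)
    (hl0 : IsLeastWord (· < ·) x false l0) (hl1 : IsLeastWord (· < ·) x true l1) :
    l1 = prepend [true] l0 := by
  obtain ⟨hl1S, hl10, hl1min⟩ := hl1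
  have hle : toLex l1 ≤ toLex (prepend [true] l0) :=
    lexLe_iff_toLex_le.1 (hl1min _ (hl0.prepend_true_inOrbitClosure hrec h1) rfl)
  have hge : toLex (prepend [true] l0) ≤ toLex l1 := by
    simpa only [prepend_singleton_tail hl10] using
      toLex_prepend_le_toLex_prepend (a := true) (hl0.toLex_le_of_inOrbitClosure hl1S.tail)
  exact toLex.injective (le_antisymm hle hge)

theorem stmt7 (x : ℕ → Bool) (hrec : Recurrent x)
    (h0 : ∃ i, x i = false) (h1 : ∃ i, x i = true)
    (l0 l1 : ℕ → Bool)
    (hl0 : IsLeastWord (· < ·) x false l0) (hl1 : IsLeastWord (· < ·) x true l1) :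
    l1 = prepend [true] l0 :=
  stmt7_general x hrec h1 l0 l1 hl0 hl1
end

section
/- Let f be the period-doubling morphism 0 ↦ 01, 1 ↦ 00. The equation 01 · x = f²(x) has a unique solution among infinite binary words, namely x = g^ω(0), the fixed point of the morphism g : 0 ↦ 0001, 1 ↦ 0101. -/
/-!
Both `f²` and `g` are 4-uniform, with `f²(a) = 010a` and `g(a) = 0a01`. Compared block by
block, `01·x = f²(x)` and `x = g(x)` both say exactly that
`x(4q) = 0, x(4q+1) = x(q), x(4q+2) = 0, x(4q+3) = 1` for all `q`. These conditions force
`x(0) = 0` and determine `x(n)` from `x(n / 4)`, so they have a single solution.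
-/

section UniformMorphism

variable {A B : Type*}

@[simp]
lemma length_wordPrefix (x : ℕ → A) (n : ℕ) : (wordPrefix x n).length = n := by
  simp [wordPrefix]

lemma getElem?_wordPrefix {x : ℕ → A} {n i : ℕ} (hi : i < n) :
    (wordPrefix x n)[i]? = some (x i) := by
  simp [wordPrefix, hi]

lemma isPrefixOfWord_iff_s9 {w : List A} {y : ℕ → A} :
    IsPrefixOfWord w y ↔ ∀ i < w.length, w[i]? = some (y i) := by
  refine ⟨fun h i hi => ?_, fun h => List.ext_getElem? fun i => ?_⟩
  · rw [← h, getElem?_wordPrefix hi]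
  · by_cases hi : i < w.length
    · rw [h i hi, getElem?_wordPrefix hi]
    · rw [List.getElem?_eq_none (by simpa using hi), List.getElem?_eq_none (by omega)]

variable {f : A → List B} {k : ℕ}

lemma length_applyMorphism_of_uniform (hf : ∀ a, (f a).length = k) (w : List A) :
    (applyMorphism f w).length = k * w.length := by
  simp [applyMorphism, List.length_flatMap, hf, List.map_const', mul_comm]

lemma getElem?_applyMorphism_of_uniform (hf : ∀ a, (f a).length = k) (w : List A)
    (q : ℕ) {r : ℕ} (hr : r < k) :
    (applyMorphism f w)[k * q + r]? = w[q]?.bind fun a => (f a)[r]? := by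
  induction w generalizing q with
  | nil => simp [applyMorphism]
  | cons a w ih =>
    have hcons : applyMorphism f (a :: w) = f a ++ applyMorphism f w := rfl
    rcases q with _ | q
    · simp [hcons, List.getElem?_append_left (hf a ▸ hr)]
    · rw [hcons, List.getElem?_append_right (by rw [hf]; nlinarith), hf,
        show k * (q + 1) + r - k = k * q + r by rw [Nat.mul_succ]; omega, ih]
      simp

lemma isWordImage_iff_of_uniform (hf : ∀ a, (f a).length = k) {x : ℕ → A} {y : ℕ → B} :
    IsWordImage f x y ↔ ∀ q, ∀ r < k, (f (x q))[r]? = some (y (k * q + r)) := by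
  simp only [IsWordImage, isPrefixOfWord_iff_s9, length_applyMorphism_of_uniform hf,
    length_wordPrefix]
  refine ⟨fun h q r hr => ?_, fun h n i hi => ?_⟩
  · have := h (q + 1) (k * q + r) (by rw [Nat.mul_succ]; omega)
    rwa [getElem?_applyMorphism_of_uniform hf _ _ hr, getElem?_wordPrefix (by omega),
      Option.bind_some] at this
  · have hk : 0 < k := Nat.pos_of_mul_pos_right (by omega : 0 < k * n)
    have hq : i / k < n := (Nat.div_lt_iff_lt_mul hk).2 (by rwa [mul_comm])
    rw [← Nat.div_add_mod i k, getElem?_applyMorphism_of_uniform hf _ _ (Nat.mod_lt i hk),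
      getElem?_wordPrefix hq, Option.bind_some, h _ _ (Nat.mod_lt i hk)]

/-- Position `n > 0` of a fixed point is read off the letter at position `n / k < n`. -/
lemma eq_of_isWordImage_self {f : A → List A} (hk : 2 ≤ k) (hf : ∀ a, (f a).length = k)
    {x y : ℕ → A}
    (hx : IsWordImage f x x) (hy : IsWordImage f y y) (h0 : x 0 = y 0) : x = y := by
  rw [isWordImage_iff_of_uniform hf] at hx hy
  funext n
  induction n using Nat.strong_induction_on with
  | _ n ih =>
    rcases Nat.eq_zero_or_pos n with rfl | hn
    · exact h0
    · have hr := Nat.mod_lt n (by omega : 0 < k)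
      have hx' := hx (n / k) (n % k) hr
      rw [ih _ (Nat.div_lt_self hn (by omega)), hy _ _ hr, Nat.div_add_mod,
        Option.some_inj] at hx'
      exact hx'.symm

end UniformMorphism

@[simp]
lemma prepend_nil {A : Type*} (x : ℕ → A) : prepend [] x = x := by
  funext n; simp [prepend]

@[simp]
lemma prepend_cons_apply_succ {A : Type*} (a : A) (w : List A) (x : ℕ → A) (n : ℕ) :
    prepend (a :: w) x (n + 1) = prepend w x n := by
  simp [prepend]

@[simp]
lemma prepend_cons_apply_zero {A : Type*} (a : A) (w : List A) (x : ℕ → A) :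
    prepend (a :: w) x 0 = a := by
  simp [prepend]

lemma gMorph_eq (a : Bool) : gMorph a = [false, a, false, true] := by
  cases a <;> rfl

lemma pdMorph_sq_eq (a : Bool) : applyMorphism pdMorph (pdMorph a) = [false, true, false, a] := by
  cases a <;> rfl

lemma isWordImage_gMorph_self_iff {x : ℕ → Bool} :
    IsWordImage gMorph x x ↔
      ∀ q, x (4 * q) = false ∧ x (4 * q + 1) = x q ∧ x (4 * q + 2) = false ∧
        x (4 * q + 3) = true := by
  rw [isWordImage_iff_of_uniform (k := 4) (by simp [gMorph_eq])]
  simp only [Nat.forall_lt_succ_right, Nat.not_lt_zero, false_imp_iff, forall_const, true_and]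
  simp [gMorph_eq, and_assoc, @eq_comm _ (x _) (x _)]

lemma isWordImage_pdMorph_sq_prepend_iff {x : ℕ → Bool} :
    IsWordImage (fun a => applyMorphism pdMorph (pdMorph a)) x (prepend [false, true] x) ↔
      IsWordImage gMorph x x := by
  rw [isWordImage_iff_of_uniform (k := 4) (by simp [pdMorph_sq_eq]), isWordImage_gMorph_self_iff]
  simp only [Nat.forall_lt_succ_right, Nat.not_lt_zero, false_imp_iff, forall_const, true_and]
  simp only [pdMorph_sq_eq, List.getElem?_cons_zero, List.getElem?_cons_succ, Option.some_inj,
    Bool.false_eq, Bool.true_eq, prepend_cons_apply_succ, prepend_nil, and_assoc]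
  constructor
  · intro h q
    obtain ⟨-, -, h0, h1⟩ := h q
    obtain ⟨h2, h3, -⟩ := h (q + 1)
    simp only [Nat.mul_succ, prepend_cons_apply_succ, prepend_nil] at h2 h3
    exact ⟨h0, h1.symm, h2, h3⟩
  · rintro h (_ | q)
    · obtain ⟨h0, h1, -⟩ := h 0
      simp only [Nat.mul_zero, zero_add] at h0 h1
      simp [h0, h1]
    · have h' := h (q + 1)
      simp only [Nat.mul_succ] at h'
      simp [Nat.mul_succ, h q, h']

theorem stmt9 (z : ℕ → Bool) (hz : IsPureMorphic gMorph false z) :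
    IsWordImage (fun a => applyMorphism pdMorph (pdMorph a)) z (prepend [false, true] z) ∧
    ∀ x : ℕ → Bool,
      IsWordImage (fun a => applyMorphism pdMorph (pdMorph a)) x (prepend [false, true] x) →
      x = z := by
  obtain ⟨hz0, -, hzg⟩ := hz
  refine ⟨isWordImage_pdMorph_sq_prepend_iff.2 hzg, fun x hx => ?_⟩
  have hxg := isWordImage_pdMorph_sq_prepend_iff.1 hx
  have hx0 : x 0 = false := (isWordImage_gMorph_self_iff.1 hxg 0).1
  exact eq_of_isWordImage_self (k := 4) (by norm_num) (by simp [gMorph_eq]) hxg hzg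
    (hx0.trans hz0.symm)
end

section
/- Let u = f^ω(0), where f is the morphism on {0,1,2,3} given by 0 ↦ 01, 1 ↦ 02, 2 ↦ 31, 3 ↦ 32, and let ρ be the natural order 0 < 1 < 2 < 3. Then u itself is the lexicographically least word in its shift orbit closure beginning with 0. -/
/-
The fixed point satisfies `u (2k) = g₀ (u k)` and `u (2k+1) = g₁ (u k)`, where the
images `01 < 02 < 31 < 32` of the letters `0 < 1 < 2 < 3` increase lexicographically, so a
lexicographic inequality between two such images pulls back to one between their preimages, at
half the position. The letter `0` only occurs at even positions `2t` with `u t ∈ {0, 1}`. If a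
suffix of `u` starting with `0` were lexicographically smaller than `u`, choose one whose first
difference with `u` is as early as possible: for `u t = 1` the suffix reads `02…` against
`u = 01…`, and for `u t = 0` the suffix at `t` would be an earlier counterexample. Finally every
word of the orbit closure starting with `0` agrees, on any prefix, with such a suffix.
-/

theorem IsPrefixOfWord.getElem_eq {A : Type*} {w : List A} {y : ℕ → A}
    (h : IsPrefixOfWord w y) (i : ℕ) (hi : i < w.length) : w[i] = y i := by
  rw [List.getElem_of_eq h.symm (by simpa [wordPrefix] using hi)]
  simp [wordPrefix]

theorem InOrbitClosure.exists_agree {A : Type*} {y x : ℕ → A} (h : InOrbitClosure y x) (n : ℕ) :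
    ∃ i, ∀ k < n, x (i + k) = y k := by
  obtain ⟨i, hi⟩ := h (wordPrefix y n) ⟨0, by simp [wordPrefix]⟩
  refine ⟨i, fun k hk => ?_⟩
  have := List.getElem_of_eq hi (by simpa [wordPrefix] using hk)
  simp only [wordPrefix, List.getElem_ofFn] at this
  exact this.symm

theorem IsWordImage.apply_two_mul {A B : Type*} {f : A → List B} {g₀ g₁ : A → B}
    (hf : ∀ a, f a = [g₀ a, g₁ a]) {x : ℕ → A} {y : ℕ → B} (h : IsWordImage f x y) (k : ℕ) :
    y (2 * k) = g₀ (x k) ∧ y (2 * k + 1) = g₁ (x k) := by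
  have hlen : ∀ n, (applyMorphism f (wordPrefix x n)).length = 2 * n := by
    intro n
    simp [applyMorphism, wordPrefix, hf, List.length_flatMap, List.sum_ofFn, mul_comm]
  have himage : applyMorphism f (wordPrefix x (k + 1))
      = applyMorphism f (wordPrefix x k) ++ [g₀ (x k), g₁ (x k)] := by
    simp only [applyMorphism, wordPrefix, List.ofFn_succ', List.concat_eq_append,
      List.flatMap_append, List.flatMap_singleton, hf]
    simp
  have hpre := h (k + 1)
  rw [himage] at hpre
  constructor
  · rw [← hpre.getElem_eq (2 * k) (by simp [hlen]),
      List.getElem_append_right (by simp [hlen])]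
    simp [hlen]
  · rw [← hpre.getElem_eq (2 * k + 1) (by simp [hlen]),
      List.getElem_append_right (by simp [hlen])]
    simp [hlen]

theorem lt_of_two_uniform_of_lt {α β : Type*} [LinearOrder α] [Preorder β] {g₀ g₁ : α → β}
    (hg : StrictMono fun a => toLex (g₀ a, g₁ a)) {x y : ℕ → β} {x' y' : ℕ → α}
    (hx : ∀ k, x (2 * k) = g₀ (x' k) ∧ x (2 * k + 1) = g₁ (x' k))
    (hy : ∀ k, y (2 * k) = g₀ (y' k) ∧ y (2 * k + 1) = g₁ (y' k))
    {j : ℕ} (hagree : ∀ k < j, x k = y k) (hlt : x j < y j) :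
    (∀ k < j / 2, x' k = y' k) ∧ x' (j / 2) < y' (j / 2) := by
  have hagree₀ : ∀ k, 2 * k < j → g₀ (x' k) = g₀ (y' k) := fun k hk => by
    rw [← (hx k).1, ← (hy k).1, hagree _ hk]
  refine ⟨fun k hk => hg.injective ?_, hg.lt_iff_lt.1 ?_⟩
  · have hagree₁ : g₁ (x' k) = g₁ (y' k) := by
      rw [← (hx k).2, ← (hy k).2, hagree _ (by omega)]
    simp only [hagree₀ k (by omega), hagree₁]
  · rw [Prod.Lex.toLex_lt_toLex]
    rcases Nat.even_or_odd' j with ⟨m, rfl | rfl⟩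
    · left
      simpa [(hx m).1, (hy m).1] using hlt
    · right
      refine ⟨hagree₀ _ (by omega), ?_⟩
      simpa [show (2 * m + 1) / 2 = m by omega, (hx m).2, (hy m).2] using hlt

def rsFst : Fin 4 → Fin 4 := ![0, 0, 3, 3]

def rsSnd : Fin 4 → Fin 4 := ![1, 2, 1, 2]

theorem rsMorph_eq (a : Fin 4) : rsMorph a = [rsFst a, rsSnd a] := by
  fin_cases a <;> rfl

theorem strictMono_rsFst_rsSnd : StrictMono fun a => toLex (rsFst a, rsSnd a) := by
  decide

namespace IsPureMorphic

variable {u : ℕ → Fin 4}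

theorem rs_apply_two_mul (hu : IsPureMorphic rsMorph 0 u) (k : ℕ) :
    u (2 * k) = rsFst (u k) ∧ u (2 * k + 1) = rsSnd (u k) :=
  hu.2.2.apply_two_mul rsMorph_eq k

theorem rs_exists_two_mul_of_eq_zero (hu : IsPureMorphic rsMorph 0 u) {i : ℕ} (hi : u i = 0) :
    ∃ t, i = 2 * t ∧ (u t = 0 ∨ u t = 1) := by
  obtain ⟨t, rfl | rfl⟩ := Nat.even_or_odd' i
  · rw [(hu.rs_apply_two_mul t).1] at hi
    exact ⟨t, rfl, (by decide : ∀ a, rsFst a = 0 → a = 0 ∨ a = 1) _ hi⟩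
  · rw [(hu.rs_apply_two_mul t).2] at hi
    exact absurd hi ((by decide : ∀ a, rsSnd a ≠ 0) _)

theorem rs_not_lexLt_shift (hu : IsPureMorphic rsMorph 0 u) {i : ℕ} (hi : u i = 0) :
    ¬ LexLt (· < ·) (fun k => u (i + k)) u := by
  rintro ⟨j, hagree, hlt⟩
  simp only at hagree hlt
  induction j using Nat.strong_induction_on generalizing i with
  | _ j ih =>
  obtain ⟨t, rfl, ht | ht⟩ := hu.rs_exists_two_mul_of_eq_zero hi
  · have hj : j ≠ 0 := by
      rintro rfl
      simp [hi, hu.1] at hlt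
    have hshift : ∀ k, u (2 * t + 2 * k) = rsFst (u (t + k)) ∧
        u (2 * t + (2 * k + 1)) = rsSnd (u (t + k)) := fun k => by
      simpa [mul_add, add_assoc] using hu.rs_apply_two_mul (t + k)
    obtain ⟨hagree', hlt'⟩ :=
      lt_of_two_uniform_of_lt strictMono_rsFst_rsSnd hshift hu.rs_apply_two_mul hagree hlt
    exact ih (j / 2) (by omega) ht hagree' hlt'
  · have hu1 : u 1 = 1 := by simpa [hu.1, rsSnd] using (hu.rs_apply_two_mul 0).2
    have hut1 : u (2 * t + 1) = 2 := by rw [(hu.rs_apply_two_mul t).2, ht]; rfl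
    rcases j with _ | _ | j
    · simp [hi, hu.1] at hlt
    · rw [hut1, hu1] at hlt
      exact absurd hlt (by decide)
    · have := hagree 1 (by omega)
      rw [hut1, hu1] at this
      exact absurd this (by decide)

end IsPureMorphic

theorem stmt16 (u : ℕ → Fin 4) (hu : IsPureMorphic rsMorph 0 u) :
    IsLeastWord (· < ·) u 0 u := by
  refine ⟨fun _ h => h, hu.1, fun y hy hy0 => ?_⟩
  by_contra hle
  obtain ⟨hnlt, hne⟩ := not_or.1 hle
  refine hne ((Pi.trichotomous_lex (· < ·) (· < ·) wellFounded_lt).trichotomous u y hnlt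
    fun ⟨j, hagree, hlt⟩ => ?_)
  obtain ⟨i, hi⟩ := hy.exists_agree (j + 1)
  have hi0 : u i = 0 := by simpa [hy0] using hi 0 (by omega)
  exact hu.rs_not_lexLt_shift hi0
    ⟨j, fun k hk => (hi k (by omega)).trans (hagree k hk), (hi j (by omega)).trans_lt hlt⟩
end
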